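/- arXiv:1408.1601 — 2 statements merged into one kernel-verified Lean document; each statement's English description precedes it below -/
import Mathlib

section
/- Let f be a rational function with no poles on the unit circle, f = R/Q in lowest terms, with poles a₁,…,a_m listed with multiplicity (where a pole at ∞ of order deg R − deg Q is included if deg R > deg Q). Suppose |f'(u)| ≤ ‖f‖_T · max(B_m⁺(u), B_m⁻(u)) holds for u on the unit circle T when deg R ≤ m, where B_m⁺(u) = Σ_{|a_j|>1} (|a_j|²−1)/|a_j−u|² and B_m⁻(u) = Σ_{|a_j|<1} (1−|a_j|²)/|a_j−u|². Then for deg R = m + d with d > 0, one has |f'(u)| ≤ max(B_m⁺(u) + d, B_m⁻(u))·‖f‖_T for all u ∈ T. -/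
/-!
Adjoin to `f` a pole of order `d` at a real point `τ > 1`: the function `f₁ = f / (z - τ)^d` has
numerator degree `m + d` equal to its number of poles, so the hypothesis bounds `f₁'`. On the
unit circle `(τ - 1)^d |f₁| ≤ |f| ≤ (τ + 1)^d |f₁|`, and `f' = (z - τ)^d f₁' + d f / (z - τ)`.
The new pole adds `d (τ² - 1) / |τ - u|² ≤ d (τ + 1) / (τ - 1)` to `B⁺`, so
`|f'(u)| ≤ r^d max(B⁺ + d r, B⁻) ‖f‖_T + d ‖f‖_T / (τ - 1)` with `r = (τ + 1) / (τ - 1) → 1`,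
and `τ → ∞` gives the claim.
-/

open Filter Topology Metric

/-- `‖f‖_T`. -/
noncomputable def circleSupNorm (f : ℂ → ℂ) : ℝ :=
  sSup ((fun v : ℂ => ‖f v‖) '' sphere (0 : ℂ) 1)

/-- `B_m⁺(u)`. -/
noncomputable def outerPoleSum {m : ℕ} (a : Fin m → ℂ) (u : ℂ) : ℝ :=
  ∑ j ∈ Finset.univ.filter (fun j => 1 < ‖a j‖), (‖a j‖ ^ 2 - 1) / ‖a j - u‖ ^ 2

/-- `B_m⁻(u)`. -/
noncomputable def innerPoleSum {m : ℕ} (a : Fin m → ℂ) (u : ℂ) : ℝ :=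
  ∑ j ∈ Finset.univ.filter (fun j => ‖a j‖ < 1), (1 - ‖a j‖ ^ 2) / ‖a j - u‖ ^ 2

lemma circleSupNorm_nonneg (f : ℂ → ℂ) : 0 ≤ circleSupNorm f :=
  Real.sSup_nonneg (Set.forall_mem_image.2 fun _ _ => norm_nonneg _)

lemma norm_le_circleSupNorm {f : ℂ → ℂ} (hf : ContinuousOn f (sphere 0 1)) {v : ℂ}
    (hv : ‖v‖ = 1) : ‖f v‖ ≤ circleSupNorm f :=
  le_csSup ((isCompact_sphere 0 1).bddAbove_image hf.norm)
    (Set.mem_image_of_mem _ (mem_sphere_zero_iff_norm.2 hv))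

lemma circleSupNorm_le {f : ℂ → ℂ} {C : ℝ} (h : ∀ v, ‖v‖ = 1 → ‖f v‖ ≤ C) :
    circleSupNorm f ≤ C :=
  csSup_le ((NormedSpace.sphere_nonempty.2 zero_le_one).image _)
    (Set.forall_mem_image.2 fun v hv => h v (mem_sphere_zero_iff_norm.1 hv))

section PoleOffCircle

variable {u c : ℂ}

lemma norm_sub_one_le_norm_sub (hu : ‖u‖ = 1) : ‖c‖ - 1 ≤ ‖u - c‖ := by
  simpa [hu, norm_sub_rev] using norm_sub_norm_le c u

lemma norm_sub_le_norm_add_one (hu : ‖u‖ = 1) : ‖u - c‖ ≤ ‖c‖ + 1 := by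
  simpa [hu, add_comm] using norm_sub_le u c

lemma norm_sq_sub_one_div_norm_sub_sq_le (hu : ‖u‖ = 1) (hc : 1 < ‖c‖) :
    (‖c‖ ^ 2 - 1) / ‖c - u‖ ^ 2 ≤ (‖c‖ + 1) / (‖c‖ - 1) := by
  have hc' : 0 < ‖c‖ - 1 := by linarith
  have hdist : (‖c‖ - 1) ^ 2 ≤ ‖c - u‖ ^ 2 := by
    rw [norm_sub_rev]; gcongr; exact norm_sub_one_le_norm_sub hu
  calc (‖c‖ ^ 2 - 1) / ‖c - u‖ ^ 2 ≤ (‖c‖ ^ 2 - 1) / (‖c‖ - 1) ^ 2 := by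
        gcongr; nlinarith
    _ = (‖c‖ + 1) / (‖c‖ - 1) := by field_simp; ring

lemma circleSupNorm_div_sub_pow_le {f : ℂ → ℂ} (hf : ContinuousOn f (sphere 0 1))
    (hc : 1 < ‖c‖) (d : ℕ) :
    circleSupNorm (fun z => f z / (z - c) ^ d) ≤ circleSupNorm f / (‖c‖ - 1) ^ d := by
  refine circleSupNorm_le fun v hv => ?_
  rw [norm_div, norm_pow]
  gcongr
  · exact circleSupNorm_nonneg f
  · exact norm_le_circleSupNorm hf hv
  · exact norm_sub_one_le_norm_sub hv

end PoleOffCircle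

/-- The derivative is written as `d (u - c)^d / (u - c)` to avoid the truncated `d - 1`. -/
lemma hasDerivAt_sub_pow (u c : ℂ) (hu : u ≠ c) (d : ℕ) :
    HasDerivAt (fun z => (z - c) ^ d) (d * (u - c) ^ d / (u - c)) u := by
  refine ((hasDerivAt_pow d (u - c)).comp_sub_const u c).congr_deriv ?_
  cases d with
  | zero => simp
  | succ k =>
    rw [Nat.add_sub_cancel, pow_succ, ← mul_assoc, mul_div_cancel_right₀ _ (sub_ne_zero.2 hu)]

lemma deriv_eq_sub_pow_mul_deriv_div {f : ℂ → ℂ} {u c : ℂ} (hf : DifferentiableAt ℂ f u)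
    (hu : u ≠ c) (d : ℕ) :
    deriv f u = (u - c) ^ d * deriv (fun z => f z / (z - c) ^ d) u + d * f u / (u - c) := by
  have hne : u - c ≠ 0 := sub_ne_zero.2 hu
  have hpow := hasDerivAt_sub_pow u c hu d
  have hf₁ : DifferentiableAt ℂ (fun z => f z / (z - c) ^ d) u :=
    hf.div hpow.differentiableAt (pow_ne_zero _ hne)
  have hfeq : f =ᶠ[𝓝 u] fun z => f z / (z - c) ^ d * (z - c) ^ d := by
    filter_upwards [eventually_ne_nhds hu] with z hz
    rw [div_mul_cancel₀ _ (pow_ne_zero _ (sub_ne_zero.2 hz))]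
  rw [hfeq.deriv_eq, (hf₁.hasDerivAt.fun_mul hpow).deriv]
  field_simp

section PoleSums

variable {m : ℕ} (a : Fin m → ℂ) (u : ℂ)

lemma innerPoleSum_nonneg : 0 ≤ innerPoleSum a u :=
  Finset.sum_nonneg fun j hj => by
    have h := (Finset.mem_filter.1 hj).2
    have : 0 ≤ 1 - ‖a j‖ ^ 2 := by nlinarith [norm_nonneg (a j)]
    positivity

variable {d : ℕ} {c : ℂ}

lemma outerPoleSum_append_const (hc : 1 < ‖c‖) :
    outerPoleSum (Fin.append a fun _ : Fin d => c) u =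
      outerPoleSum a u + d * ((‖c‖ ^ 2 - 1) / ‖c - u‖ ^ 2) := by
  simp [outerPoleSum, Finset.sum_filter, Fin.sum_univ_add, hc]

lemma innerPoleSum_append_const (hc : 1 ≤ ‖c‖) :
    innerPoleSum (Fin.append a fun _ : Fin d => c) u = innerPoleSum a u := by
  simp [innerPoleSum, Finset.sum_filter, Fin.sum_univ_add, not_lt.2 hc]

lemma prod_sub_append_const (z : ℂ) :
    ∏ j, (z - Fin.append a (fun _ : Fin d => c) j) = (∏ j, (z - a j)) * (z - c) ^ d := by
  simp [Fin.prod_univ_add]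

end PoleSums

section RationalFunction

variable {m : ℕ} (R : Polynomial ℂ) {a : Fin m → ℂ}

lemma differentiableAt_eval_div_prod_sub {z : ℂ} (hz : ∀ j, z ≠ a j) :
    DifferentiableAt ℂ (fun z => R.eval z / ∏ j, (z - a j)) z :=
  R.differentiableAt.div (DifferentiableAt.fun_finsetProd fun j _ =>
      (differentiableAt_id.sub_const (a j)))
    (Finset.prod_ne_zero_iff.2 fun j _ => sub_ne_zero.2 (hz j))

lemma continuousOn_sphere_eval_div_prod_sub (ha : ∀ j, ‖a j‖ ≠ 1) :
    ContinuousOn (fun z => R.eval z / ∏ j, (z - a j)) (sphere 0 1) := fun z hz =>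
  (differentiableAt_eval_div_prod_sub R fun j h =>
    ha j (by rwa [← h, ← mem_sphere_zero_iff_norm])).continuousAt.continuousWithinAt

end RationalFunction

/-- The bound on `|f'(u)|` obtained by adjoining a pole of order `d` at distance `ρ` from `0`. -/
noncomputable def adjoinedPoleBound (B B' S : ℝ) (d : ℕ) (ρ : ℝ) : ℝ :=
  ((ρ + 1) / (ρ - 1)) ^ d * max (B + d * ((ρ + 1) / (ρ - 1))) B' * S + d * S / (ρ - 1)

lemma norm_deriv_le_of_div_sub_pow {f : ℂ → ℂ} {u c : ℂ} {B B' : ℝ} {d : ℕ}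
    (hf : DifferentiableAt ℂ f u) (hfT : ContinuousOn f (sphere 0 1)) (hu : ‖u‖ = 1)
    (hc : 1 < ‖c‖) (hB' : 0 ≤ B')
    (hH : ‖deriv (fun z => f z / (z - c) ^ d) u‖ ≤
      max (B + d * ((‖c‖ ^ 2 - 1) / ‖c - u‖ ^ 2)) B' *
        circleSupNorm (fun z => f z / (z - c) ^ d)) :
    ‖deriv f u‖ ≤ adjoinedPoleBound B B' (circleSupNorm f) d ‖c‖ := by
  rw [adjoinedPoleBound]
  have huc : u ≠ c := by rintro rfl; exact hc.ne' hu
  have hc₁ : 0 < ‖c‖ - 1 := by linarith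
  set M := max (B + d * ((‖c‖ + 1) / (‖c‖ - 1))) B'
  have hM : 0 ≤ M := hB'.trans (le_max_right _ _)
  have hderiv : ‖deriv (fun z => f z / (z - c) ^ d) u‖ ≤
      M * (circleSupNorm f / (‖c‖ - 1) ^ d) := by
    refine hH.trans (mul_le_mul ?_ (circleSupNorm_div_sub_pow_le hfT hc d)
      (circleSupNorm_nonneg _) hM)
    exact max_le_max_right B' (by grw [norm_sq_sub_one_div_norm_sub_sq_le hu hc])
  calc ‖deriv f u‖
      = ‖(u - c) ^ d * deriv (fun z => f z / (z - c) ^ d) u + d * f u / (u - c)‖ := by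
        rw [deriv_eq_sub_pow_mul_deriv_div hf huc]
    _ ≤ ‖u - c‖ ^ d * ‖deriv (fun z => f z / (z - c) ^ d) u‖ + d * ‖f u‖ / ‖u - c‖ := by
        refine (norm_add_le _ _).trans_eq ?_
        simp
    _ ≤ (‖c‖ + 1) ^ d * (M * (circleSupNorm f / (‖c‖ - 1) ^ d)) +
          d * circleSupNorm f / (‖c‖ - 1) := by
        have := circleSupNorm_nonneg f
        gcongr
        · exact norm_sub_le_norm_add_one hu
        · exact norm_le_circleSupNorm hfT hu
        · exact norm_sub_one_le_norm_sub hu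
    _ = _ := by rw [div_pow]; field_simp

lemma tendsto_add_one_div_sub_one_atTop :
    Tendsto (fun τ : ℝ => (τ + 1) / (τ - 1)) atTop (𝓝 1) := by
  have h : Tendsto (fun τ : ℝ => 1 + 2 * (τ - 1)⁻¹) atTop (𝓝 (1 + 2 * 0)) :=
    ((tendsto_inv_atTop_zero.comp (tendsto_atTop_add_const_right _ (-1) tendsto_id)).const_mul
      2).const_add 1
  rw [mul_zero, add_zero] at h
  refine h.congr' ((eventually_gt_atTop 1).mono fun τ hτ => ?_)
  field_simp [(sub_pos.2 hτ).ne']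
  ring

lemma tendsto_adjoinedPoleBound_atTop (B B' S : ℝ) (d : ℕ) :
    Tendsto (adjoinedPoleBound B B' S d) atTop (𝓝 (max (B + d) B' * S)) := by
  have hr := tendsto_add_one_div_sub_one_atTop
  have hτ : Tendsto (fun τ : ℝ => τ - 1) atTop atTop := tendsto_atTop_add_const_right _ _ tendsto_id
  have h := (((hr.pow d).mul (((hr.const_mul (d : ℝ)).const_add B).max
    (tendsto_const_nhds (x := B')))).mul_const S).add
    ((tendsto_const_nhds (x := (d * S : ℝ))).div_atTop hτ)
  unfold adjoinedPoleBound
  simpa using h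

theorem borwein_erdelyi_higher_degree_general
    (H : ∀ (m' : ℕ) (a' : Fin m' → ℂ), (∀ j, ‖a' j‖ ≠ 1) →
      ∀ R' : Polynomial ℂ, R'.natDegree ≤ m' →
      ∀ u : ℂ, ‖u‖ = 1 →
        ‖deriv (fun z : ℂ => R'.eval z / ∏ j, (z - a' j)) u‖ ≤
          max (∑ j ∈ Finset.univ.filter (fun j => 1 < ‖a' j‖),
                  (‖a' j‖ ^ 2 - 1) / ‖a' j - u‖ ^ 2)
              (∑ j ∈ Finset.univ.filter (fun j => ‖a' j‖ < 1),
                  (1 - ‖a' j‖ ^ 2) / ‖a' j - u‖ ^ 2) *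
          sSup ((fun v : ℂ => ‖R'.eval v / ∏ j, (v - a' j)‖) ''
            Metric.sphere (0 : ℂ) 1))
    (m d : ℕ) (a : Fin m → ℂ) (ha : ∀ j, ‖a j‖ ≠ 1)
    (R : Polynomial ℂ) (hR : R.natDegree = m + d) :
    ∀ u : ℂ, ‖u‖ = 1 →
      ‖deriv (fun z : ℂ => R.eval z / ∏ j, (z - a j)) u‖ ≤
        max ((∑ j ∈ Finset.univ.filter (fun j => 1 < ‖a j‖),
                (‖a j‖ ^ 2 - 1) / ‖a j - u‖ ^ 2) + (d : ℝ))
            (∑ j ∈ Finset.univ.filter (fun j => ‖a j‖ < 1),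
                (1 - ‖a j‖ ^ 2) / ‖a j - u‖ ^ 2) *
        sSup ((fun v : ℂ => ‖R.eval v / ∏ j, (v - a j)‖) ''
          Metric.sphere (0 : ℂ) 1) := by
  intro u hu
  set f := fun z : ℂ => R.eval z / ∏ j, (z - a j)
  have hf : DifferentiableAt ℂ f u := differentiableAt_eval_div_prod_sub R fun j h => ha j (h ▸ hu)
  have hfT := continuousOn_sphere_eval_div_prod_sub R ha
  refine ge_of_tendsto (tendsto_adjoinedPoleBound_atTop (outerPoleSum a u) (innerPoleSum a u)
    (circleSupNorm f) d) ((eventually_gt_atTop 1).mono fun τ hτ => ?_)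
  have hτc : ‖(τ : ℂ)‖ = τ := Complex.norm_of_nonneg (by linarith)
  set a' := Fin.append a fun _ : Fin d => (τ : ℂ)
  have ha' : ∀ j, ‖a' j‖ ≠ 1 := (Fin.forall_fin_add _).2 ⟨by simpa [a'] using ha, fun _ => by
    simpa [a', abs_of_pos (zero_lt_one.trans hτ)] using hτ.ne'⟩
  have hH : ‖deriv (fun z => R.eval z / ∏ j, (z - a' j)) u‖ ≤ max (outerPoleSum a' u)
      (innerPoleSum a' u) * circleSupNorm (fun z => R.eval z / ∏ j, (z - a' j)) :=
    H (m + d) a' ha' R hR.le u hu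
  simp only [a', prod_sub_append_const, ← div_div] at hH
  rw [outerPoleSum_append_const a u (by linarith),
    innerPoleSum_append_const a u (by linarith)] at hH
  have := norm_deriv_le_of_div_sub_pow hf hfT hu (by linarith) (innerPoleSum_nonneg a u) hH
  rwa [hτc] at this

/-- If the Borwein–Erdélyi inequality holds for rational functions whose numerator degree
does not exceed the number of (finite) poles, then for a numerator of degree `m + d`
(`d > 0`) one has the bound with `B_m⁺(u) + d` in the maximum. -/
theorem borwein_erdelyi_higher_degree
    (H : ∀ (m' : ℕ) (a' : Fin m' → ℂ), (∀ j, ‖a' j‖ ≠ 1) →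
      ∀ R' : Polynomial ℂ, R'.natDegree ≤ m' →
      ∀ u : ℂ, ‖u‖ = 1 →
        ‖deriv (fun z : ℂ => R'.eval z / ∏ j, (z - a' j)) u‖ ≤
          max (∑ j ∈ Finset.univ.filter (fun j => 1 < ‖a' j‖),
                  (‖a' j‖ ^ 2 - 1) / ‖a' j - u‖ ^ 2)
              (∑ j ∈ Finset.univ.filter (fun j => ‖a' j‖ < 1),
                  (1 - ‖a' j‖ ^ 2) / ‖a' j - u‖ ^ 2) *
          sSup ((fun v : ℂ => ‖R'.eval v / ∏ j, (v - a' j)‖) ''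
            Metric.sphere (0 : ℂ) 1))
    (m d : ℕ) (hd : 0 < d) (a : Fin m → ℂ) (ha : ∀ j, ‖a j‖ ≠ 1)
    (R : Polynomial ℂ) (hR : R.natDegree = m + d) :
    ∀ u : ℂ, ‖u‖ = 1 →
      ‖deriv (fun z : ℂ => R.eval z / ∏ j, (z - a j)) u‖ ≤
        max ((∑ j ∈ Finset.univ.filter (fun j => 1 < ‖a j‖),
                (‖a j‖ ^ 2 - 1) / ‖a j - u‖ ^ 2) + (d : ℝ))
            (∑ j ∈ Finset.univ.filter (fun j => ‖a j‖ < 1),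
                (1 - ‖a j‖ ^ 2) / ‖a j - u‖ ^ 2) *
        sSup ((fun v : ℂ => ‖R.eval v / ∏ j, (v - a j)‖) ''
          Metric.sphere (0 : ℂ) 1) :=
  borwein_erdelyi_higher_degree_general H m d a ha R hR
end

section
/- Let G ⊆ ℂ∞ be a domain containing ∞, g_G(·,∞) its Green's function with pole at ∞, and f a function meromorphic on G whose only pole is at ∞ of order n, extending continuously to ∂G. Then |f(u)| ≤ ‖f‖_{∂G} · exp(n·g_G(u,∞)) for all u ∈ G (Bernstein–Walsh estimate). -/
/-!
For `c > n`, the function `φ_c = |f| e^{-c g}` is near each point of `G` the modulus of the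
holomorphic function `f e^{-c h}`, where `h` is a local holomorphic function with `Re h = g`.
It tends to `|f|` at `∂G` and, because `|f(u)| = O(|u|^n)` while `g(u) ≥ log |u| - O(1)`, to `0`
at `∞`. Hence its superlevel sets above `‖f‖_{∂G}` are compact, a maximum over one of them is
a maximum over `G`, and the maximum principle spreads it over a whole component of `G`, whose
boundary lies in `∂G`; so `φ_c ≤ ‖f‖_{∂G}`. Letting `c ↓ n` gives the estimate.
-/

open Filter Set Metric Topology

theorem frontier_connectedComponentIn_subset {α : Type*} [TopologicalSpace α]
    [LocallyConnectedSpace α] {U : Set α} (hU : IsOpen U) (x : α) :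
    frontier (connectedComponentIn U x) ⊆ frontier U := by
  intro w hw
  have hwC : w ∉ connectedComponentIn U x := by
    rw [hU.connectedComponentIn.frontier_eq] at hw
    exact hw.2
  have hcl : w ∈ closure (connectedComponentIn U x) := frontier_subset_closure hw
  refine ⟨closure_mono (connectedComponentIn_subset U x) hcl, fun hwU => hwC ?_⟩
  have hx : x ∈ U := by
    by_contra hx
    simp [connectedComponentIn_eq_empty hx] at hcl
  have hins : IsPreconnected (insert w (connectedComponentIn U x)) :=
    isPreconnected_connectedComponentIn.subset_closure (subset_insert _ _)
      (insert_subset hcl subset_closure)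
  exact hins.subset_connectedComponentIn (mem_insert_of_mem _ (mem_connectedComponentIn hx))
    (insert_subset (interior_subset hwU) (connectedComponentIn_subset U x)) (mem_insert w _)

theorem isCompact_superlevelSet {X : Type*} [TopologicalSpace X] {φ : X → ℝ} {U : Set X}
    (hφ : ∀ u ∈ U, ContinuousAt φ u) {t : ℝ}
    (hbdry : ∀ w ∈ frontier U, ∀ᶠ v in 𝓝[U] w, φ v < t)
    (hinfty : ∀ᶠ v in cocompact X, v ∈ U → φ v < t) :
    IsCompact {v | v ∈ U ∧ t ≤ φ v} := by
  set K := {v | v ∈ U ∧ t ≤ φ v}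
  have hKU : K ⊆ U := fun v hv => hv.1
  obtain ⟨L, hL, hLsub⟩ := mem_cocompact.1 hinfty
  have hKL : K ⊆ L := fun v ⟨hvU, hvt⟩ =>
    by_contra fun hvL => (hLsub hvL hvU).not_ge hvt
  refine hL.of_isClosed_subset (isClosed_of_closure_subset fun w hw => ?_) hKL
  by_cases hwU : w ∈ U
  · exact ⟨hwU, continuousWithinAt_const.closure_le hw (hφ w hwU).continuousWithinAt
      fun v hv => hv.2⟩
  · have hwfr : w ∈ frontier U := ⟨closure_mono hKU hw, fun h => hwU (interior_subset h)⟩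
    have : (𝓝[K] w).NeBot := mem_closure_iff_nhdsWithin_neBot.1 hw
    obtain ⟨v, hvK, hvt⟩ := (eventually_mem_nhdsWithin.and
      ((hbdry w hwfr).filter_mono (nhdsWithin_mono w hKU))).exists
    exact (hvt.not_ge hvK.2).elim

variable {E : Type*} [NormedAddCommGroup E] [NormedSpace ℂ E]

def IsLocallyHolomorphicNormOn (φ : E → ℝ) (U : Set E) : Prop :=
  ∀ u ∈ U, ∃ F : E → ℂ, ∀ᶠ v in 𝓝 u, DifferentiableAt ℂ F v ∧ φ v = ‖F v‖

namespace IsLocallyHolomorphicNormOn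

variable {φ : E → ℝ} {U : Set E}

theorem continuousAt (hφ : IsLocallyHolomorphicNormOn φ U) {u : E} (hu : u ∈ U) :
    ContinuousAt φ u := by
  obtain ⟨F, hF⟩ := hφ u hu
  exact (hF.self_of_nhds.1.continuousAt.norm).congr
    (hF.mono fun v hv => hv.2.symm)

theorem eventually_eq_of_isLocalMax (hφ : IsLocallyHolomorphicNormOn φ U) {u : E}
    (hu : u ∈ U) (hmax : IsLocalMax φ u) : ∀ᶠ v in 𝓝 u, φ v = φ u := by
  obtain ⟨F, hF⟩ := hφ u hu
  have hFmax : IsLocalMax (norm ∘ F) u := by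
    filter_upwards [hmax, hF] with v hv hFv
    simpa [← hFv.2, ← hF.self_of_nhds.2] using hv
  filter_upwards [Complex.norm_eventually_eq_of_isLocalMax (hF.mono fun v hv => hv.1) hFmax, hF]
    with v hv hFv
  rw [hFv.2, hv, hF.self_of_nhds.2]

theorem eqOn_connectedComponentIn_of_isMaxOn (hφ : IsLocallyHolomorphicNormOn φ U)
    (hU : IsOpen U) {z : E} (hz : z ∈ U) (hmax : IsMaxOn φ U z) :
    ∀ v ∈ connectedComponentIn U z, φ v = φ z := by
  set T := {v | v ∈ U ∧ φ v = φ z}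
  have hT : IsOpen T := by
    refine isOpen_iff_mem_nhds.2 fun v ⟨hvU, hvz⟩ => ?_
    have hloc : IsLocalMax φ v := by
      filter_upwards [hU.mem_nhds hvU] with w hw
      exact hvz ▸ hmax hw
    filter_upwards [hφ.eventually_eq_of_isLocalMax hvU hloc, hU.mem_nhds hvU] with w hw hwU
    exact ⟨hwU, hw.trans hvz⟩
  have hclosed : closure T ∩ connectedComponentIn U z ⊆ T := by
    rintro x ⟨hxT, hxC⟩
    have hxU := connectedComponentIn_subset U z hxC
    have hx : φ x ∈ closure (φ '' T) :=
      (hφ.continuousAt hxU).continuousWithinAt.mem_closure_image hxT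
    have himage : φ '' T ⊆ {φ z} := by
      rintro _ ⟨v, hv, rfl⟩
      exact hv.2
    exact ⟨hxU, by simpa using closure_mono himage hx⟩
  intro v hv
  exact (isPreconnected_connectedComponentIn.subset_of_closure_inter_subset hT
    ⟨z, mem_connectedComponentIn hz, hz, rfl⟩ hclosed hv).2

theorem le_of_forall_mem_frontier_eventually_lt [Nontrivial E] (hφ : IsLocallyHolomorphicNormOn φ U)
    (hU : IsOpen U) {M : ℝ}
    (hbdry : ∀ w ∈ frontier U, ∀ t > M, ∀ᶠ v in 𝓝[U] w, φ v < t)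
    (hinfty : ∀ t > M, ∀ᶠ v in cocompact E, v ∈ U → φ v < t) :
    ∀ u ∈ U, φ u ≤ M := by
  intro u hu
  by_contra! hMu
  set K := {v | v ∈ U ∧ φ u ≤ φ v}
  have hK : IsCompact K := isCompact_superlevelSet (fun v hv => hφ.continuousAt hv)
    (fun w hw => hbdry w hw _ hMu) (hinfty _ hMu)
  obtain ⟨z, hzK, hzmax⟩ := hK.exists_isMaxOn ⟨u, hu, le_rfl⟩
    fun v hv => (hφ.continuousAt hv.1).continuousWithinAt
  have hmax : IsMaxOn φ U z := fun v hv =>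
    if h : φ u ≤ φ v then hzmax ⟨hv, h⟩ else (not_le.1 h).le.trans hzK.2
  have hconst := hφ.eqOn_connectedComponentIn_of_isMaxOn hU hzK.1 hmax
  set C := connectedComponentIn U z
  have hCK : C ⊆ K := fun v hv =>
    ⟨connectedComponentIn_subset _ _ hv, (hconst v hv).symm ▸ hzK.2⟩
  obtain ⟨w, hw⟩ : (frontier C).Nonempty := nonempty_frontier_iff.2
    ⟨⟨z, mem_connectedComponentIn hzK.1⟩, fun h =>
      noncompact_univ E (hK.of_isClosed_subset isClosed_univ (h ▸ hCK))⟩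
  have hlt : ∀ᶠ v in 𝓝[C] w, φ v < φ z :=
    (hbdry w (frontier_connectedComponentIn_subset hU z hw) _ (hMu.trans_le hzK.2)).filter_mono
      (nhdsWithin_mono w (connectedComponentIn_subset U z))
  have : (𝓝[C] w).NeBot := mem_closure_iff_nhdsWithin_neBot.1 (frontier_subset_closure hw)
  obtain ⟨v, hvC, hv⟩ := (eventually_mem_nhdsWithin.and hlt).exists
  exact hv.ne (hconst v hvC)

end IsLocallyHolomorphicNormOn

theorem isLocallyHolomorphicNormOn_norm_mul_exp {f : E → ℂ} {g : E → ℝ} {U : Set E}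
    (hU : IsOpen U) (hf : DifferentiableOn ℂ f U)
    (hg : ∀ u ∈ U, ∃ ε > 0, ∃ h : E → ℂ,
      DifferentiableOn ℂ h (ball u ε) ∧ ∀ v ∈ ball u ε, g v = (h v).re) (c : ℝ) :
    IsLocallyHolomorphicNormOn (fun v => ‖f v‖ * Real.exp (-(c * g v))) U := by
  intro u hu
  obtain ⟨ε, hε, h, hh, hgh⟩ := hg u hu
  refine ⟨fun v => f v * Complex.exp (-c * h v), ?_⟩
  filter_upwards [hU.mem_nhds hu, ball_mem_nhds u hε] with v hvU hvb
  refine ⟨(hf.differentiableAt (hU.mem_nhds hvU)).mul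
    ((hh.differentiableAt (isOpen_ball.mem_nhds hvb)).const_mul _).cexp, ?_⟩
  simp [Complex.norm_exp, hgh v hvb]

section

variable {F : Type*} [SeminormedAddCommGroup F]

theorem tendsto_norm_mul_exp_neg_nhdsWithin {X : Type*} [TopologicalSpace X] {f : X → F}
    {g : X → ℝ} {U : Set X} {w : X} (hf : ContinuousWithinAt f U w)
    (hg : Tendsto g (𝓝[U] w) (𝓝 0)) (c : ℝ) :
    Tendsto (fun v => ‖f v‖ * Real.exp (-(c * g v))) (𝓝[U] w) (𝓝 ‖f w‖) := by
  simpa using hf.norm.tendsto.mul ((hg.const_mul c).neg.rexp)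

theorem tendsto_norm_mul_exp_neg_cocompact {E : Type*} [NormedAddCommGroup E] [ProperSpace E]
    {f : E → F} {g : E → ℝ} {n : ℕ} {c : ℝ}
    (hf : ∃ A r : ℝ, ∀ u, r ≤ ‖u‖ → ‖f u‖ ≤ A * ‖u‖ ^ n)
    (hg : ∃ B r : ℝ, ∀ u, r ≤ ‖u‖ → Real.log ‖u‖ - B ≤ g u) (hc : (n : ℝ) < c) :
    Tendsto (fun u => ‖f u‖ * Real.exp (-(c * g u))) (cocompact E) (𝓝 0) := by
  obtain ⟨A, r, hA⟩ := hf
  obtain ⟨B, s, hB⟩ := hg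
  have hc0 : 0 ≤ c := (Nat.cast_nonneg n).trans hc.le
  have hdecay :
      Tendsto (fun u => A * Real.exp (c * B) * ‖u‖ ^ (-(c - n))) (cocompact E) (𝓝 0) := by
    simpa using ((tendsto_rpow_neg_atTop (sub_pos.2 hc)).comp
      tendsto_norm_cocompact_atTop).const_mul (A * Real.exp (c * B))
  refine squeeze_zero' (Eventually.of_forall fun u => by positivity) ?_ hdecay
  filter_upwards [tendsto_norm_cocompact_atTop.eventually_ge_atTop (max (max r s) 1)] with u hu
  have hur : r ≤ ‖u‖ := le_trans (by simp) hu
  have hpos : 0 < ‖u‖ := zero_lt_one.trans_le (le_trans (le_max_right _ _) hu)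
  have hexp : Real.exp (-(c * g u)) ≤ Real.exp (c * B) * ‖u‖ ^ (-c) := by
    rw [Real.rpow_def_of_pos hpos, ← Real.exp_add]
    refine Real.exp_le_exp.2 ?_
    nlinarith [mul_le_mul_of_nonneg_left (hB u (le_trans (by simp) hu)) hc0]
  calc ‖f u‖ * Real.exp (-(c * g u))
      ≤ A * ‖u‖ ^ n * (Real.exp (c * B) * ‖u‖ ^ (-c)) :=
        mul_le_mul (hA u hur) hexp (Real.exp_pos _).le ((norm_nonneg _).trans (hA u hur))
    _ = A * Real.exp (c * B) * ‖u‖ ^ (-(c - n)) := by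
        rw [show -(c - n) = (n : ℝ) + -c by ring, Real.rpow_add hpos, Real.rpow_natCast]
        ring

end

theorem norm_mul_exp_neg_le_of_forall_mem_frontier_norm_le [Nontrivial E] [ProperSpace E]
    {U : Set E} (hU : IsOpen U) {f : E → ℂ} {g : E → ℝ} {n : ℕ} {M c : ℝ}
    (hf_holo : DifferentiableOn ℂ f U) (hf_cont : ContinuousOn f (closure U))
    (hf_growth : ∃ A r : ℝ, ∀ u, r ≤ ‖u‖ → ‖f u‖ ≤ A * ‖u‖ ^ n)
    (hg_harm : ∀ u ∈ U, ∃ ε > 0, ∃ h : E → ℂ,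
      DifferentiableOn ℂ h (ball u ε) ∧ ∀ v ∈ ball u ε, g v = (h v).re)
    (hg_bdry : ∀ w ∈ frontier U, Tendsto g (𝓝[U] w) (𝓝 0))
    (hg_lower : ∃ B r : ℝ, ∀ u, r ≤ ‖u‖ → Real.log ‖u‖ - B ≤ g u)
    (hM : ∀ w ∈ frontier U, ‖f w‖ ≤ M) (hM0 : 0 ≤ M) (hc : (n : ℝ) < c) :
    ∀ u ∈ U, ‖f u‖ * Real.exp (-(c * g u)) ≤ M := by
  have hbdry : ∀ w ∈ frontier U, ∀ t > M,
      ∀ᶠ v in 𝓝[U] w, ‖f v‖ * Real.exp (-(c * g v)) < t := fun w hw t ht =>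
    (tendsto_norm_mul_exp_neg_nhdsWithin ((hf_cont w (frontier_subset_closure hw)).mono
      subset_closure) (hg_bdry w hw) c).eventually_lt_const ((hM w hw).trans_lt ht)
  have hinfty : ∀ t > M,
      ∀ᶠ v in cocompact E, v ∈ U → ‖f v‖ * Real.exp (-(c * g v)) < t := fun t ht =>
    ((tendsto_norm_mul_exp_neg_cocompact hf_growth hg_lower hc).eventually_lt_const
      (hM0.trans_lt ht)).mono fun v hv _ => hv
  exact (isLocallyHolomorphicNormOn_norm_mul_exp hU hf_holo hg_harm c
    ).le_of_forall_mem_frontier_eventually_lt hU hbdry hinfty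

theorem bernstein_walsh_estimate_general
    (E : Set ℂ) (hE : IsCompact E) (f : ℂ → ℂ) (g : ℂ → ℝ) (n : ℕ)
    (hf_holo : DifferentiableOn ℂ f Eᶜ)
    (hf_cont : ContinuousOn f (closure Eᶜ))
    (hf_growth : ∃ C r : ℝ, ∀ u : ℂ, r ≤ ‖u‖ →
      ‖f u‖ ≤ C * ‖u‖ ^ n)
    (hg_harm : ∀ u ∈ (Eᶜ : Set ℂ), ∃ ε > 0, ∃ h : ℂ → ℂ,
      DifferentiableOn ℂ h (Metric.ball u ε) ∧ ∀ v ∈ Metric.ball u ε, g v = (h v).re)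
    (hg_bdry : ∀ u ∈ frontier (Eᶜ : Set ℂ),
      Filter.Tendsto g (nhdsWithin u Eᶜ) (nhds 0))
    (hg_infty : ∃ C r : ℝ, ∀ u : ℂ, r ≤ ‖u‖ →
      |g u - Real.log ‖u‖| ≤ C) :
    ∀ u ∈ (Eᶜ : Set ℂ), ‖f u‖ ≤
      sSup ((fun z => ‖f z‖) '' frontier (Eᶜ : Set ℂ)) *
        Real.exp (n * g u) := by
  intro u hu
  set M := sSup ((fun z => ‖f z‖) '' frontier (Eᶜ : Set ℂ))
  have hG : IsOpen Eᶜ := hE.isClosed.isOpen_compl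
  have hfr : IsCompact (frontier Eᶜ) := hE.of_isClosed_subset isClosed_frontier
    (frontier_compl E ▸ hE.isClosed.frontier_subset)
  have hfM : ∀ w ∈ frontier Eᶜ, ‖f w‖ ≤ M := fun w hw =>
    le_csSup (hfr.image_of_continuousOn (hf_cont.mono frontier_subset_closure).norm).bddAbove
      (mem_image_of_mem _ hw)
  have hM0 : 0 ≤ M := Real.sSup_nonneg (by rintro _ ⟨w, -, rfl⟩; exact norm_nonneg _)
  have hg_lower : ∃ B r : ℝ, ∀ u : ℂ, r ≤ ‖u‖ → Real.log ‖u‖ - B ≤ g u := by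
    obtain ⟨B, r, h⟩ := hg_infty
    exact ⟨B, r, fun u hu => by linarith [(abs_le.1 (h u hu)).1]⟩
  have hbound (c : ℝ) (hc : (n : ℝ) < c) : ‖f u‖ ≤ M * Real.exp (c * g u) := by
    have hφ := norm_mul_exp_neg_le_of_forall_mem_frontier_norm_le hG hf_holo hf_cont hf_growth
      hg_harm hg_bdry hg_lower hfM hM0 hc u hu
    rwa [Real.exp_neg, ← div_eq_mul_inv, div_le_iff₀ (Real.exp_pos _)] at hφ
  have hlim : Tendsto (fun c : ℝ => M * Real.exp (c * g u)) (𝓝[>] (n : ℝ))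
      (𝓝 (M * Real.exp (n * g u))) :=
    ((by fun_prop : Continuous fun c : ℝ => M * Real.exp (c * g u)).tendsto _).mono_left
      nhdsWithin_le_nhds
  exact ge_of_tendsto hlim (eventually_nhdsWithin_of_forall hbound)

/-- Bernstein–Walsh estimate: if `f` is holomorphic on the domain `G = Eᶜ` (a domain
containing `∞`, here `E` compact), continuous up to the boundary, with its only pole at
`∞` of order (at most) `n`, and `g` is the Green's function of `G` with pole at `∞`
(nonnegative, harmonic, zero boundary values, `log|u| + O(1)` at infinity), then
`|f(u)| ≤ ‖f‖_{∂G} · exp(n · g(u))` on `G`. -/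
theorem bernstein_walsh_estimate
    (E : Set ℂ) (hE : IsCompact E) (f : ℂ → ℂ) (g : ℂ → ℝ) (n : ℕ)
    (hf_holo : DifferentiableOn ℂ f Eᶜ)
    (hf_cont : ContinuousOn f (closure Eᶜ))
    (hf_growth : ∃ C r : ℝ, ∀ u : ℂ, r ≤ ‖u‖ →
      ‖f u‖ ≤ C * ‖u‖ ^ n)
    (hg_nonneg : ∀ u ∈ (Eᶜ : Set ℂ), 0 ≤ g u)
    (hg_harm : ∀ u ∈ (Eᶜ : Set ℂ), ∃ ε > 0, ∃ h : ℂ → ℂ,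
      DifferentiableOn ℂ h (Metric.ball u ε) ∧ ∀ v ∈ Metric.ball u ε, g v = (h v).re)
    (hg_bdry : ∀ u ∈ frontier (Eᶜ : Set ℂ),
      Filter.Tendsto g (nhdsWithin u Eᶜ) (nhds 0))
    (hg_infty : ∃ C r : ℝ, ∀ u : ℂ, r ≤ ‖u‖ →
      |g u - Real.log ‖u‖| ≤ C) :
    ∀ u ∈ (Eᶜ : Set ℂ), ‖f u‖ ≤
      sSup ((fun z => ‖f z‖) '' frontier (Eᶜ : Set ℂ)) *
        Real.exp (n * g u) :=
  bernstein_walsh_estimate_general E hE f g n hf_holo hf_cont hf_growth hg_harm hg_bdry hg_infty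
end
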